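/- Let X : Fin n → Matrix (Fin D) (Fin D) ℂ be positive semidefinite matrices and let 𝔥(X) denote the infimum of the real traces of Hermitian matrices H such that H − X i is positive semidefinite for every i. Then 𝔥(X) ≤ ∑ i, Re (Matrix.trace (X i)); moreover, if the matrices have pairwise orthogonal supports (X i * X j = 0 whenever i ≠ j), then 𝔥(X) = ∑ i, Re (Matrix.trace (X i)). -/

import Mathlib

open Matrix
open scoped Kronecker ComplexOrder

noncomputable section

/-- A measurement (POVM): a finite family of positive semidefinite matrices summing to `1`. -/
def IsMeasurement {ι κ : Type*} [Fintype ι] [DecidableEq ι] [Fintype κ]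
    (A : κ → Matrix ι ι ℂ) : Prop :=
  (∀ x, (A x).PosSemidef) ∧ ∑ x, A x = 1

/-- `A` is a post-processing of `B`: `A ⪯ B`. -/
def PostProc {ι : Type*} {n m : ℕ}
    (A : Fin n → Matrix ι ι ℂ) (B : Fin m → Matrix ι ι ℂ) : Prop :=
  ∃ μ : Fin n → Fin m → ℝ,
    (∀ x y, 0 ≤ μ x y) ∧ (∀ y, ∑ x, μ x y = 1) ∧
    (∀ x, A x = ∑ y, (μ x y : ℂ) • B y)

/-- The outer product `|E⟩⟨F|` of the vectorizations of two matrices. -/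
def outerProd {ι : Type*} (E F : Matrix ι ι ℂ) : Matrix (ι × ι) (ι × ι) ℂ :=
  Matrix.of fun p q => E p.1 p.2 * star (F q.1 q.2)

/-- The (un-normalized) Fisher information map of a measurement. -/
noncomputable def Fisher {ι κ : Type*} [Fintype ι] [Fintype κ]
    (A : κ → Matrix ι ι ℂ) : Matrix (ι × ι) (ι × ι) ℂ :=
  ∑ x, (Matrix.trace (A x))⁻¹ • outerProd (A x) (A x)

/-- The positive semidefinite square root, as `Matrix.PosSemidef.sqrt` was defined in the older Mathlib. -/
noncomputable def PosSemidef.sqrt' {ι : Type*} [Fintype ι] [DecidableEq ι] {A : Matrix ι ι ℂ}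
    (hA : A.PosSemidef) : Matrix ι ι ℂ :=
  hA.1.eigenvectorUnitary.1 * diagonal ((↑) ∘ (√·) ∘ hA.1.eigenvalues) *
  (star hA.1.eigenvectorUnitary : Matrix ι ι ℂ)

/-- The generalized Fisher information map of a measurement, relative to a
positive definite state `ρ` (with positive semidefinite square root `ρ^{1/2}`). -/
noncomputable def FisherRho {ι κ : Type*} [Fintype ι] [DecidableEq ι] [Fintype κ]
    {ρ : Matrix ι ι ℂ} (hρ : ρ.PosDef) (A : κ → Matrix ι ι ℂ) :
    Matrix (ι × ι) (ι × ι) ℂ :=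
  ∑ x, (Matrix.trace (ρ * A x))⁻¹ •
    outerProd (PosSemidef.sqrt' hρ.posSemidef * A x) (PosSemidef.sqrt' hρ.posSemidef * A x)

/-- The height of a finite family of self-adjoint matrices: the infimum of the traces of
Hermitian matrices dominating every member in the Loewner order. -/
noncomputable def height {ι κ : Type*} [Fintype ι] [Fintype κ]
    (X : κ → Matrix ι ι ℂ) : ℝ :=
  sInf { t : ℝ | ∃ H : Matrix ι ι ℂ, H.IsHermitian ∧
    (∀ i, (H - X i).PosSemidef) ∧ t = (Matrix.trace H).re }

/-!
`∑ i, X i` dominates every `X i`, which gives the inequality. For the converse under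
`X i * X j = 0`, the support projections `P i` of the `X i` are pairwise orthogonal, so
`T = ∑ i, P i` and `1 - T` are projections, and every `H` dominating the `X i` is `≥ 0`. Hence
`tr H = tr ((1 - T) H) + ∑ i, tr (P i H) ≥ ∑ i, tr (P i X i) = ∑ i, tr (X i)`,
since `tr (Q A) = tr (Q A Q) ≥ 0` for a projection `Q` and `A ≥ 0`.
-/

theorem IsStarProjection.sum {R ι : Type*} [NonUnitalSemiring R] [StarRing R]
    {p : ι → R} (s : Finset ι) (hp : ∀ i ∈ s, IsStarProjection (p i))
    (horth : (s : Set ι).Pairwise fun i j => p i * p j = 0) :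
    IsStarProjection (∑ i ∈ s, p i) := by
  classical
  induction s using Finset.induction_on with
  | empty => simp [IsStarProjection.zero]
  | insert a s ha ih =>
    rw [Finset.sum_insert ha]
    refine (hp a (s.mem_insert_self a)).add
      (ih (fun i hi => hp i (Finset.mem_insert_of_mem hi)) (horth.mono (by simp))) ?_
    rw [Finset.mul_sum]
    exact Finset.sum_eq_zero fun j hj =>
      horth (by simp) (by simp [hj]) (ne_of_mem_of_not_mem hj ha).symm

namespace Matrix

variable {𝕜 n : Type*} [RCLike 𝕜] [Fintype n]

section SupportProjection

variable [DecidableEq n] {A M : Matrix n n 𝕜}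

/-- `x⁻¹ * x` is the indicator of `x ≠ 0` since `0⁻¹ = 0`, so for Hermitian `A` this is the
orthogonal projection onto the range of `A`. -/
noncomputable def supportProj (A : Matrix n n 𝕜) : Matrix n n 𝕜 := cfc (fun x : ℝ => x⁻¹ * x) A

theorem isStarProjection_supportProj (A : Matrix n n 𝕜) : IsStarProjection (supportProj A) where
  isSelfAdjoint := cfc_predicate _ _
  isIdempotentElem := by
    rw [IsIdempotentElem, supportProj, ← cfc_mul _ _ _ (finite_real_spectrum.continuousOn _)
      (finite_real_spectrum.continuousOn _)]
    congr! 2 with x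
    rcases eq_or_ne x 0 with rfl | hx
    · simp
    · simp [hx]

theorem supportProj_eq_cfc_inv_mul (hA : A.IsHermitian) :
    supportProj A = cfc (·⁻¹ : ℝ → ℝ) A * A := by
  have := cfc_mul (·⁻¹ : ℝ → ℝ) id A (finite_real_spectrum.continuousOn _)
  rwa [cfc_id ℝ A hA.isSelfAdjoint] at this

theorem supportProj_eq_mul_cfc_inv (hA : A.IsHermitian) :
    supportProj A = A * cfc (·⁻¹ : ℝ → ℝ) A := by
  have := cfc_mul id (·⁻¹ : ℝ → ℝ) A continuousOn_id (finite_real_spectrum.continuousOn _)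
  rw [cfc_id ℝ A hA.isSelfAdjoint] at this
  simpa only [supportProj, id, mul_comm] using this

theorem supportProj_mul_self (hA : A.IsHermitian) : supportProj A * A = A := by
  have h : cfc (fun x : ℝ => x⁻¹ * x * x) A = cfc (fun x => x) A := cfc_congr fun x _ => by
    rcases eq_or_ne x 0 with rfl | hx <;> simp [*]
  rwa [cfc_mul (fun x : ℝ => x⁻¹ * x) (fun x => x) A (finite_real_spectrum.continuousOn _),
    cfc_id' ℝ A hA.isSelfAdjoint] at h

theorem supportProj_mul_eq_zero (hA : A.IsHermitian) (h : A * M = 0) :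
    supportProj A * M = 0 := by
  rw [supportProj_eq_cfc_inv_mul hA, mul_assoc, h, mul_zero]

theorem mul_supportProj_eq_zero (hA : A.IsHermitian) (h : M * A = 0) :
    M * supportProj A = 0 := by
  rw [supportProj_eq_mul_cfc_inv hA, ← mul_assoc, h, zero_mul]

theorem supportProj_mul_supportProj_eq_zero {B : Matrix n n 𝕜} (hA : A.IsHermitian)
    (hB : B.IsHermitian) (h : A * B = 0) : supportProj A * supportProj B = 0 :=
  mul_supportProj_eq_zero hB (supportProj_mul_eq_zero hA h)

end SupportProjection

theorem trace_mul_nonneg_of_isStarProjection {P H : Matrix n n 𝕜} (hP : IsStarProjection P)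
    (hH : H.PosSemidef) : 0 ≤ (P * H).trace := by
  have hPHP : (P * H * P).PosSemidef := by
    simpa [← star_eq_conjTranspose, hP.isSelfAdjoint.star_eq] using hH.mul_mul_conjTranspose_same P
  calc (0 : 𝕜) ≤ (P * H * P).trace := hPHP.trace_nonneg
    _ = (P * (P * H)).trace := trace_mul_comm _ _
    _ = (P * H).trace := by rw [← mul_assoc, hP.isIdempotentElem.eq]

theorem trace_le_trace_mul_of_isStarProjection {P H X : Matrix n n 𝕜} (hP : IsStarProjection P)
    (hPX : P * X = X) (hHX : (H - X).PosSemidef) : X.trace ≤ (P * H).trace := by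
  have := trace_mul_nonneg_of_isStarProjection hP hHX
  rwa [mul_sub, hPX, trace_sub, sub_nonneg] at this

theorem sum_trace_le_trace_of_mul_eq_zero [DecidableEq n] {κ : Type*} [Fintype κ]
    {X : κ → Matrix n n 𝕜} (hX : ∀ i, (X i).IsHermitian)
    (horth : Pairwise fun i j => X i * X j = 0) {H : Matrix n n 𝕜} (hH : H.PosSemidef)
    (hHX : ∀ i, (H - X i).PosSemidef) : ∑ i, (X i).trace ≤ H.trace := by
  set T := ∑ i, supportProj (X i)
  have hT : IsStarProjection T := IsStarProjection.sum _
    (fun i _ => isStarProjection_supportProj (X i))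
    fun i _ j _ hij => supportProj_mul_supportProj_eq_zero (hX i) (hX j) (horth hij)
  calc ∑ i, (X i).trace
      ≤ ∑ i, (supportProj (X i) * H).trace := Finset.sum_le_sum fun i _ =>
        trace_le_trace_mul_of_isStarProjection (isStarProjection_supportProj (X i))
          (supportProj_mul_self (hX i)) (hHX i)
    _ = (T * H).trace := by rw [Finset.sum_mul, trace_sum]
    _ ≤ (T * H).trace + ((1 - T) * H).trace :=
        le_add_of_nonneg_right (trace_mul_nonneg_of_isStarProjection hT.one_sub hH)
    _ = H.trace := by rw [← trace_add, ← add_mul, add_sub_cancel, one_mul]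

end Matrix

open Matrix

section Height

variable {ι κ : Type*} [Fintype ι] [Fintype κ] {X : κ → Matrix ι ι ℂ}

/-- With no constraints the feasible traces are all of `ℝ` (or `{0}` when `ι` is empty), and
`sInf` of a set unbounded below is `0` in `ℝ`. -/
theorem height_of_isEmpty [IsEmpty κ] (X : κ → Matrix ι ι ℂ) : height X = 0 := by
  classical
  rcases isEmpty_or_nonempty ι with hι | hι
  · refine le_antisymm (Real.sInf_nonpos' ⟨0, ⟨0, by simp, isEmptyElim, by simp⟩, le_rfl⟩)
      (Real.sInf_nonneg ?_)
    rintro _ ⟨H, -, -, rfl⟩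
    simp [trace]
  · obtain ⟨i⟩ := hι
    refine Real.sInf_of_not_bddBelow fun ⟨b, hb⟩ => ?_
    have : b ≤ b - 1 := hb ⟨single i i ((b - 1 : ℝ) : ℂ),
      by simp [IsHermitian, conjTranspose_single], isEmptyElim, by simp⟩
    linarith

theorem height_le_re_trace [Nonempty κ] (hX : ∀ i, (X i).PosSemidef) {H : Matrix ι ι ℂ}
    (hH : H.IsHermitian) (hHX : ∀ i, (H - X i).PosSemidef) : height X ≤ H.trace.re := by
  refine csInf_le ⟨0, ?_⟩ ⟨H, hH, hHX, rfl⟩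
  rintro _ ⟨H', -, hH'X, rfl⟩
  obtain ⟨i⟩ := ‹Nonempty κ›
  have hH' : H'.PosSemidef := by simpa using (hH'X i).add (hX i)
  exact Complex.re_le_re hH'.trace_nonneg

theorem le_height {t : ℝ} {H₀ : Matrix ι ι ℂ} (hH₀ : H₀.IsHermitian)
    (hH₀X : ∀ i, (H₀ - X i).PosSemidef)
    (h : ∀ H : Matrix ι ι ℂ, H.IsHermitian → (∀ i, (H - X i).PosSemidef) → t ≤ H.trace.re) :
    t ≤ height X := by
  refine le_csInf ⟨_, H₀, hH₀, hH₀X, rfl⟩ ?_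
  rintro _ ⟨H, hH, hHX, rfl⟩
  exact h H hH hHX

end Height

/-- The height is bounded by the sum of the traces, with equality for matrices with
pairwise orthogonal supports. -/
theorem stmt15 {D n : ℕ} (X : Fin n → Matrix (Fin D) (Fin D) ℂ)
    (hX : ∀ i, (X i).PosSemidef) :
    height X ≤ ∑ i, (Matrix.trace (X i)).re ∧
    ((∀ i j, i ≠ j → X i * X j = 0) → height X = ∑ i, (Matrix.trace (X i)).re) := by
  rcases isEmpty_or_nonempty (Fin n) with hn | hn
  · simp [height_of_isEmpty]
  have hsum : (∑ i, X i).IsHermitian := isSelfAdjoint_sum _ fun i _ => (hX i).1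
  have hsumX : ∀ i, (∑ j, X j - X i).PosSemidef := fun i => by
    rw [← Finset.sum_erase_eq_sub (Finset.mem_univ i)]
    exact posSemidef_sum _ fun j _ => hX j
  have hle : height X ≤ ∑ i, (X i).trace.re := by
    simpa [trace_sum, Complex.re_sum] using height_le_re_trace hX hsum hsumX
  refine ⟨hle, fun horth => hle.antisymm (le_height hsum hsumX fun H _ hHX => ?_)⟩
  obtain ⟨i₀⟩ := hn
  have hH : H.PosSemidef := by simpa using (hHX i₀).add (hX i₀)
  rw [← Complex.re_sum]
  exact Complex.re_le_re (sum_trace_le_trace_of_mul_eq_zero (fun i => (hX i).1) horth hH hHX)
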